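/- Let g be the unique solution of the Cauchy problem g' = 1/√(a∘g), g(0) = 0, g > 0 on (0,∞), set h(s) := f(g(s))/√(a(g(s))), let ℓ ≥ 0, and let φ be the unique solution of φ'(s) = √(ℓ² + 2∫_{g(φ(s))}^{+∞} f(ξ)dξ) for s > 0, φ(0) = 0, φ > 0 on (0,∞). Then there exists a constant C > 0 such that lim_{τ→0⁺} φ(τ)·h(φ(τ)) / τ^{(2−2γ)/(1+γ−2μ)} = C; consequently, the integral ∫₀¹ φ(ξ)h(φ(ξ)) dξ is finite if and only if γ < 3 − 2μ. -/

import Mathlib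

/-!
Power laws at `0⁺` are written as `u s / s ^ α → A`. Both `g` and `φ` solve autonomous equations
`u' = b(u)` with `b(x) ∼ B x ^ δ`, `δ < 1`: for `g`, `b = 1/√a ∼ x ^ μ / √a₀`; for `φ`,
`b(x) = √(ℓ² + 2∫_{g(x)}^∞ f)`, and since `∫_t^∞ f ∼ f₀ t ^ (1 - γ) / (γ - 1)` and `g` is a power
law, `b(x) ∼ B x ^ (-(γ - 1) / (2 (1 - μ)))`. For such an equation `(u ^ (1 - δ))' → (1 - δ) B`,
so by L'Hôpital `u(s) ∼ ((1 - δ) B s) ^ (1 / (1 - δ))`. Composing these power laws gives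
`φ(τ) h(φ(τ)) ∼ C τ ^ e` with `e = (2 - 2γ)/(1 + γ - 2μ)`, and `τ ^ e` is integrable at `0` iff
`e > -1`, i.e. iff `γ < 3 - 2μ`.
-/

open Set Filter MeasureTheory
open scoped Topology

/-- `g` solves the Cauchy problem `g' = 1/√(a∘g)` on `(0,∞)`, `g(0) = 0`, `g > 0` on
`(0,∞)`, with `g ∈ C([0,∞)) ∩ C²((0,∞))`. -/
def IsCauchyG (a : ℝ → ℝ) (g : ℝ → ℝ) : Prop :=
  ContinuousOn g (Ici 0) ∧ ContDiffOn ℝ 2 g (Ioi 0) ∧ g 0 = 0 ∧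
  (∀ s > (0 : ℝ), 0 < g s) ∧
  ∀ s > (0 : ℝ), HasDerivAt g (1 / Real.sqrt (a (g s))) s

open Asymptotics

lemma tendsto_nhdsGT_zero_of_continuousOn_Ici {u : ℝ → ℝ} (hu : ContinuousOn u (Ici 0))
    (h0 : u 0 = 0) (hpos : ∀ s > (0 : ℝ), 0 < u s) : Tendsto u (𝓝[>] 0) (𝓝[>] 0) := by
  refine tendsto_nhdsWithin_of_tendsto_nhds_of_eventually_within _ ?_
    (eventually_nhdsWithin_of_forall hpos)
  simpa [h0] using (hu 0 self_mem_Ici).tendsto.mono_left (nhdsWithin_mono _ Ioi_subset_Ici_self)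

lemma Filter.Tendsto.mul_div_rpow {u v : ℝ → ℝ} {α β A B : ℝ}
    (hu : Tendsto (fun s => u s / s ^ α) (𝓝[>] 0) (𝓝 A))
    (hv : Tendsto (fun s => v s / s ^ β) (𝓝[>] 0) (𝓝 B)) :
    Tendsto (fun s => u s * v s / s ^ (α + β)) (𝓝[>] 0) (𝓝 (A * B)) := by
  refine (hu.mul hv).congr' ?_
  filter_upwards [self_mem_nhdsWithin] with s (hs : 0 < s)
  rw [Real.rpow_add hs, mul_div_mul_comm]

lemma Filter.Tendsto.comp_div_rpow {u v : ℝ → ℝ} {α β A B : ℝ}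
    (hu : Tendsto (fun x => u x / x ^ α) (𝓝[>] 0) (𝓝 A))
    (hv : Tendsto (fun s => v s / s ^ β) (𝓝[>] 0) (𝓝 B)) (hB : 0 < B)
    (hv0 : Tendsto v (𝓝[>] 0) (𝓝[>] 0)) :
    Tendsto (fun s => u (v s) / s ^ (α * β)) (𝓝[>] 0) (𝓝 (A * B ^ α)) := by
  have hpow := (Real.continuousAt_rpow_const B α (Or.inl hB.ne')).tendsto.comp hv
  refine ((hu.comp hv0).mul hpow).congr' ?_
  filter_upwards [self_mem_nhdsWithin, hv0 self_mem_nhdsWithin]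
    with s (hs : 0 < s) (hvs : 0 < v s)
  rw [Function.comp_apply, Function.comp_apply, Real.div_rpow hvs.le (Real.rpow_nonneg hs.le _),
    ← Real.rpow_mul hs.le, mul_comm β, div_mul_div_cancel₀ (Real.rpow_pos_of_pos hvs _).ne']

lemma tendsto_div_rpow_neg_of_tendsto_mul_rpow {f : ℝ → ℝ} {γ L : ℝ}
    (h : Tendsto (fun s => f s * s ^ γ) (𝓝[>] 0) (𝓝 L)) :
    Tendsto (fun s => f s / s ^ (-γ)) (𝓝[>] 0) (𝓝 L) := by
  refine h.congr' ?_
  filter_upwards [self_mem_nhdsWithin] with s (hs : 0 < s)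
  rw [Real.rpow_neg hs.le, div_inv_eq_mul]

lemma tendsto_one_div_sqrt_div_rpow {a : ℝ → ℝ} {μ a₀ : ℝ} (ha₀ : 0 < a₀)
    (h : Tendsto (fun s => a s * s ^ (2 * μ)) (𝓝[>] 0) (𝓝 a₀)) :
    Tendsto (fun s => 1 / Real.sqrt (a s) / s ^ μ) (𝓝[>] 0) (𝓝 (1 / Real.sqrt a₀)) := by
  refine ((h.sqrt.inv₀ (Real.sqrt_pos.2 ha₀).ne').congr' ?_).trans (by rw [one_div])
  filter_upwards [self_mem_nhdsWithin] with s (hs : 0 < s)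
  rw [Real.sqrt_mul' _ (Real.rpow_nonneg hs.le _), Real.sqrt_eq_rpow (s ^ _),
    ← Real.rpow_mul hs.le, show 2 * μ * (1 / 2) = μ by ring, mul_inv, one_div, div_eq_mul_inv]

lemma tendsto_sqrt_sq_add_two_mul_div_rpow {G : ℝ → ℝ} {α A : ℝ} (hα : α < 0) (ℓ : ℝ)
    (hG : Tendsto (fun x => G x / x ^ α) (𝓝[>] 0) (𝓝 A)) :
    Tendsto (fun x => Real.sqrt (ℓ ^ 2 + 2 * G x) / x ^ (α / 2)) (𝓝[>] 0)
      (𝓝 (Real.sqrt (2 * A))) := by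
  have hℓ : Tendsto (fun x => ℓ ^ 2 / x ^ α) (𝓝[>] 0) (𝓝 0) :=
    tendsto_const_nhds.div_atTop (tendsto_rpow_neg_nhdsGT_zero hα)
  refine ((hℓ.add (hG.const_mul 2)).sqrt.congr' ?_).trans (by rw [zero_add])
  filter_upwards [self_mem_nhdsWithin] with x (hx : 0 < x)
  rw [← mul_div_assoc, ← add_div, Real.sqrt_div' _ (Real.rpow_nonneg hx.le _),
    Real.sqrt_eq_rpow (x ^ α), ← Real.rpow_mul hx.le, mul_one_div]

theorem tendsto_div_rpow_of_hasDerivAt_comp {u b : ℝ → ℝ} {δ B : ℝ} (hδ : δ < 1) (hB : 0 < B)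
    (hu : Tendsto u (𝓝[>] 0) (𝓝[>] 0)) (hu' : ∀ᶠ s in 𝓝[>] 0, HasDerivAt u (b (u s)) s)
    (hb : Tendsto (fun x => b x / x ^ δ) (𝓝[>] 0) (𝓝 B)) :
    Tendsto (fun s => u s / s ^ (1 - δ)⁻¹) (𝓝[>] 0) (𝓝 (((1 - δ) * B) ^ (1 - δ)⁻¹)) := by
  have hκ : 0 < 1 - δ := sub_pos.2 hδ
  have hupos : ∀ᶠ s in 𝓝[>] 0, 0 < u s := hu self_mem_nhdsWithin
  have hlhop : Tendsto (fun s => u s ^ (1 - δ) / s) (𝓝[>] 0) (𝓝 ((1 - δ) * B)) := by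
    refine HasDerivAt.lhopital_zero_nhdsGT (g' := fun _ => 1)
      (f' := fun s => b (u s) * (1 - δ) * u s ^ (1 - δ - 1)) ?_
      (Eventually.of_forall hasDerivAt_id) (Eventually.of_forall fun _ => one_ne_zero) ?_
      (tendsto_id.mono_left nhdsWithin_le_nhds) ?_
    · filter_upwards [hu', hupos] with s hs hpos
      exact hs.rpow_const (Or.inl hpos.ne')
    · simpa [Function.comp_def, Real.zero_rpow hκ.ne'] using
        (Real.continuousAt_rpow_const 0 _ (Or.inr hκ.le)).tendsto.comp
          (hu.mono_right nhdsWithin_le_nhds)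
    · refine ((hb.comp hu).const_mul (1 - δ)).congr' ?_
      filter_upwards [hupos] with s hs
      rw [Function.comp_apply, sub_sub_cancel_left, Real.rpow_neg hs.le]
      ring
  refine ((Real.continuousAt_rpow_const _ (1 - δ)⁻¹ (Or.inl (mul_pos hκ hB).ne')).tendsto.comp
    hlhop).congr' ?_
  filter_upwards [self_mem_nhdsWithin, hupos] with s (hs : 0 < s) hus
  rw [Function.comp_apply, Real.div_rpow (Real.rpow_nonneg hus.le _) hs.le,
    ← Real.rpow_mul hus.le, mul_inv_cancel₀ hκ.ne', Real.rpow_one]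

theorem tendsto_div_rpow_of_hasDerivAt_sqrt {φ G : ℝ → ℝ} {ℓ α A : ℝ} (hα : α < 0) (hA : 0 < A)
    (hG : Tendsto (fun x => G x / x ^ α) (𝓝[>] 0) (𝓝 A)) (hφ : Tendsto φ (𝓝[>] 0) (𝓝[>] 0))
    (hφ' : ∀ᶠ s in 𝓝[>] 0, HasDerivAt φ (Real.sqrt (ℓ ^ 2 + 2 * G (φ s))) s) :
    Tendsto (fun τ => φ τ / τ ^ (1 - α / 2)⁻¹) (𝓝[>] 0)
      (𝓝 (((1 - α / 2) * Real.sqrt (2 * A)) ^ (1 - α / 2)⁻¹)) :=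
  tendsto_div_rpow_of_hasDerivAt_comp (b := fun x => Real.sqrt (ℓ ^ 2 + 2 * G x)) (by linarith)
    (by positivity) hφ hφ' (tendsto_sqrt_sq_add_two_mul_div_rpow hα ℓ hG)

theorem isLittleO_integral_Ioi_rpow {r : ℝ → ℝ} {α : ℝ} (hα : α < -1)
    (hr : ∀ M > (0 : ℝ), IntegrableOn r (Ioi M)) (ho : r =o[𝓝[>] 0] fun s => s ^ α) :
    (fun t => ∫ s in Ioi t, r s) =o[𝓝[>] 0] fun t => t ^ (α + 1) := by
  refine IsLittleO.of_bound fun c hc => ?_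
  set c' := c * -(α + 1) / 2 with hc'
  have hc'pos : 0 < c' := div_pos (mul_pos hc (by linarith)) two_pos
  obtain ⟨d, hd, hbound⟩ : ∃ d > 0, ∀ s ∈ Ioo 0 d, ‖r s‖ ≤ c' * s ^ α := by
    obtain ⟨d, hd, hsub⟩ :=
      mem_nhdsGT_iff_exists_Ioo_subset.1 ((ho.def hc'pos).and self_mem_nhdsWithin)
    refine ⟨d, hd, fun s hs => ?_⟩
    obtain ⟨hle, hs0 : 0 < s⟩ := hsub hs
    rwa [Real.norm_of_nonneg (Real.rpow_nonneg hs0.le _)] at hle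
  have htail : ∀ᶠ t in 𝓝[>] 0, ‖∫ s in Ici d, r s‖ ≤ c / 2 * t ^ (α + 1) :=
    ((tendsto_rpow_neg_nhdsGT_zero (by linarith)).const_mul_atTop
      (by positivity)).eventually_ge_atTop _
  filter_upwards [htail, Ioo_mem_nhdsGT hd] with t htail ⟨ht, htd⟩
  have hrt := hr t ht
  have hpow := integrableOn_Ioi_rpow_of_lt hα ht
  have hnear : ‖∫ s in Ioo t d, r s‖ ≤ c / 2 * t ^ (α + 1) := calc
    ‖∫ s in Ioo t d, r s‖ ≤ ∫ s in Ioo t d, c' * s ^ α :=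
      norm_integral_le_of_norm_le ((hpow.mono_set Ioo_subset_Ioi_self).const_mul c')
        (ae_restrict_of_forall_mem measurableSet_Ioo fun s hs => hbound s ⟨ht.trans hs.1, hs.2⟩)
    _ ≤ ∫ s in Ioi t, c' * s ^ α :=
      setIntegral_mono_set (hpow.const_mul c')
        (ae_restrict_of_forall_mem measurableSet_Ioi fun s (hs : t < s) =>
          mul_nonneg hc'pos.le (Real.rpow_nonneg (ht.trans hs).le _))
        (Eventually.of_forall Ioo_subset_Ioi_self)
    _ = c / 2 * t ^ (α + 1) := by
      have hα1 : α + 1 ≠ 0 := by linarith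
      rw [integral_const_mul, integral_Ioi_rpow_of_lt hα ht, hc']
      field_simp
  rw [← Ioo_union_Ici_eq_Ioi htd,
    setIntegral_union ((Iio_disjoint_Ici le_rfl).mono_left Ioo_subset_Iio_self) measurableSet_Ici
      (hrt.mono_set Ioo_subset_Ioi_self) (hrt.mono_set (Ici_subset_Ioi.2 htd)),
    Real.norm_of_nonneg (Real.rpow_nonneg ht.le _)]
  linarith [norm_add_le (∫ s in Ioo t d, r s) (∫ s in Ici d, r s)]

theorem tendsto_integral_Ioi_div_rpow {f : ℝ → ℝ} {α A : ℝ} (hα : α < -1)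
    (hf : ∀ M > (0 : ℝ), IntegrableOn f (Ioi M))
    (hlim : Tendsto (fun s => f s / s ^ α) (𝓝[>] 0) (𝓝 A)) :
    Tendsto (fun t => (∫ s in Ioi t, f s) / t ^ (α + 1)) (𝓝[>] 0) (𝓝 (-A / (α + 1))) := by
  have hpow (M : ℝ) (hM : 0 < M) := integrableOn_Ioi_rpow_of_lt hα hM
  have ho : (fun s => f s - A * s ^ α) =o[𝓝[>] 0] fun s => s ^ α := by
    refine (isLittleO_iff_tendsto' ?_).2 ?_
    · filter_upwards [self_mem_nhdsWithin] with s (hs : 0 < s) h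
      exact absurd h (Real.rpow_pos_of_pos hs _).ne'
    · refine (show Tendsto _ _ (𝓝 (A - A)) from hlim.sub_const A).congr' ?_ |>.trans (by simp)
      filter_upwards [self_mem_nhdsWithin] with s (hs : 0 < s)
      rw [sub_div, mul_div_cancel_right₀ _ (Real.rpow_pos_of_pos hs _).ne']
  have hrest := (isLittleO_integral_Ioi_rpow (r := fun s => f s - A * s ^ α) hα
    (fun M hM => (hf M hM).sub ((hpow M hM).const_mul A)) ho).tendsto_div_nhds_zero
  refine ((hrest.add_const (-A / (α + 1))).congr' ?_).trans (by rw [zero_add])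
  filter_upwards [self_mem_nhdsWithin] with t (ht : 0 < t)
  have hα1 : α + 1 ≠ 0 := by linarith
  have htα := (Real.rpow_pos_of_pos ht (α + 1)).ne'
  rw [integral_sub (hf t ht) ((hpow t ht).const_mul A), integral_const_mul,
    integral_Ioi_rpow_of_lt hα ht]
  field_simp
  ring

theorem integrableOn_Ioo_zero_iff_of_tendsto_div_rpow {w : ℝ → ℝ} {e C b : ℝ} (hb : 0 < b)
    (hw : ContinuousOn w (Ioi 0)) (hC : 0 < C)
    (hlim : Tendsto (fun τ => w τ / τ ^ e) (𝓝[>] 0) (𝓝 C)) :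
    IntegrableOn w (Ioo 0 b) ↔ -1 < e := by
  obtain ⟨δ, hδ, hδb, hbounds⟩ : ∃ δ > 0, δ ≤ b ∧
      ∀ τ ∈ Ioo 0 δ, C / 2 * τ ^ e ≤ w τ ∧ w τ ≤ 2 * C * τ ^ e := by
    have hratio := hlim.eventually (Icc_mem_nhds (half_lt_self hC) (by linarith : C < 2 * C))
    obtain ⟨δ, hδ, hsub⟩ :=
      mem_nhdsGT_iff_exists_Ioo_subset.1 (hratio.and self_mem_nhdsWithin)
    refine ⟨min δ b, lt_min hδ hb, min_le_right _ _, fun τ hτ => ?_⟩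
    obtain ⟨⟨hlo, hhi⟩, hτ0 : 0 < τ⟩ := hsub ⟨hτ.1, hτ.2.trans_le (min_le_left _ _)⟩
    have hτe := Real.rpow_pos_of_pos hτ0 e
    exact ⟨(le_div_iff₀ hτe).1 hlo, (div_le_iff₀ hτe).1 hhi⟩
  have hτe (τ : ℝ) (hτ : τ ∈ Ioo 0 δ) : 0 < τ ^ e := Real.rpow_pos_of_pos hτ.1 e
  have hpow_meas : AEStronglyMeasurable (fun τ : ℝ => τ ^ e) (volume.restrict (Ioo 0 δ)) :=
    (ContinuousOn.rpow_const continuousOn_id fun τ hτ => Or.inl hτ.1.ne').aestronglyMeasurable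
      measurableSet_Ioo
  have hnear : IntegrableOn w (Ioo 0 δ) ↔ IntegrableOn (fun τ : ℝ => τ ^ e) (Ioo 0 δ) := by
    constructor
    · refine fun h => (h.const_mul (2 / C)).mono' hpow_meas
        (ae_restrict_of_forall_mem measurableSet_Ioo fun τ hτ => ?_)
      rw [Real.norm_of_nonneg (hτe τ hτ).le]
      calc τ ^ e = 2 / C * (C / 2 * τ ^ e) := by field_simp
        _ ≤ 2 / C * w τ := by gcongr; exact (hbounds τ hτ).1
    · refine fun h => (h.const_mul (2 * C)).mono'
        ((hw.mono fun τ hτ => hτ.1).aestronglyMeasurable measurableSet_Ioo)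
        (ae_restrict_of_forall_mem measurableSet_Ioo fun τ hτ => ?_)
      rw [Real.norm_of_nonneg ((mul_pos (half_pos hC) (hτe τ hτ)).le.trans (hbounds τ hτ).1)]
      exact (hbounds τ hτ).2
  have hfar : IntegrableOn w (Ico δ b) :=
    (hw.mono fun τ hτ => hδ.trans_le hτ.1).integrableOn_Icc.mono_set Ico_subset_Icc_self
  rw [← Ioo_union_Ico_eq_Ioo hδ hδb, integrableOn_union, and_iff_left hfar, hnear,
    intervalIntegral.integrableOn_Ioo_rpow_iff hδ]

theorem IsCauchyG.tendsto_nhdsGT_zero {a g : ℝ → ℝ} (hg : IsCauchyG a g) :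
    Tendsto g (𝓝[>] 0) (𝓝[>] 0) :=
  tendsto_nhdsGT_zero_of_continuousOn_Ici hg.1 hg.2.2.1 hg.2.2.2.1

theorem IsCauchyG.tendsto_div_rpow {a g : ℝ → ℝ} {μ a₀ : ℝ} (hg : IsCauchyG a g) (hμ : μ < 1)
    (ha₀ : 0 < a₀) (hlim : Tendsto (fun s => a s * s ^ (2 * μ)) (𝓝[>] 0) (𝓝 a₀)) :
    Tendsto (fun s => g s / s ^ (1 - μ)⁻¹) (𝓝[>] 0)
      (𝓝 (((1 - μ) * (1 / Real.sqrt a₀)) ^ (1 - μ)⁻¹)) :=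
  tendsto_div_rpow_of_hasDerivAt_comp (b := fun x => 1 / Real.sqrt (a x)) hμ (by positivity)
    hg.tendsto_nhdsGT_zero (eventually_nhdsWithin_of_forall hg.2.2.2.2)
    (tendsto_one_div_sqrt_div_rpow ha₀ hlim)

theorem IsCauchyG.continuousOn_mul_comp_div_sqrt {a g f φ : ℝ → ℝ} (hg : IsCauchyG a g)
    (ha : ContinuousOn a (Ioi 0)) (ha_pos : ∀ s > (0 : ℝ), 0 < a s) (hf : ContinuousOn f (Ioi 0))
    (hφ : ContinuousOn φ (Ici 0)) (hφ_pos : ∀ s > (0 : ℝ), 0 < φ s) :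
    ContinuousOn (fun ξ => φ ξ * (f (g (φ ξ)) / Real.sqrt (a (g (φ ξ))))) (Ioi 0) := by
  obtain ⟨hg_cont, -, -, hg_pos, -⟩ := hg
  have hφ' := hφ.mono Ioi_subset_Ici_self
  have hgφ : ContinuousOn (fun ξ => g (φ ξ)) (Ioi 0) :=
    hg_cont.comp hφ' fun ξ hξ => (hφ_pos ξ hξ).le
  have hmaps : MapsTo (fun ξ => g (φ ξ)) (Ioi 0) (Ioi 0) := fun ξ hξ => hg_pos _ (hφ_pos ξ hξ)
  exact hφ'.mul ((hf.comp hgφ hmaps).div (ha.comp hgφ hmaps).sqrt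
    fun ξ hξ => (Real.sqrt_pos.2 (ha_pos _ (hmaps hξ))).ne')

theorem phi_h_integrability_general (a : ℝ → ℝ) (ha_pos : ∀ s > (0 : ℝ), 0 < a s)
    (ha_reg : ContDiffOn ℝ 1 a (Ioi 0))
    (f : ℝ → ℝ) (hf_reg : ContDiffOn ℝ 1 f (Ioi 0))
    (a₀ f₀ μ γ : ℝ) (ha₀ : 0 < a₀) (hf₀ : 0 < f₀) (hμ₁ : μ < 1) (hγ : 1 < γ)
    (hlim_a : Tendsto (fun s : ℝ => a s * s ^ (2 * μ)) (𝓝[>] 0) (𝓝 a₀))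
    (hlim_f : Tendsto (fun s : ℝ => f s * s ^ γ) (𝓝[>] 0) (𝓝 f₀))
    (hf_int : ∀ M > (0 : ℝ), IntegrableOn f (Ioi M))
    (g : ℝ → ℝ) (hg : IsCauchyG a g)
    (ℓ : ℝ) (φ : ℝ → ℝ)
    (hφ_cont : ContinuousOn φ (Ici 0))
    (hφ0 : φ 0 = 0) (hφ_pos : ∀ s > (0 : ℝ), 0 < φ s)
    (hφ' : ∀ s > (0 : ℝ),
      HasDerivAt φ (Real.sqrt (ℓ ^ 2 + 2 * ∫ ξ in Ioi (g (φ s)), f ξ)) s) :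
    ∃ C > (0 : ℝ),
      Tendsto (fun τ : ℝ =>
          (φ τ * (f (g (φ τ)) / Real.sqrt (a (g (φ τ))))) / τ ^ ((2 - 2 * γ) / (1 + γ - 2 * μ)))
        (𝓝[>] 0) (𝓝 C) ∧
      (IntegrableOn (fun ξ => φ ξ * (f (g (φ ξ)) / Real.sqrt (a (g (φ ξ))))) (Ioo 0 1) ↔
        γ < 3 - 2 * μ) := by
  have hμ' : 0 < 1 - μ := by linarith
  have ha_asymp := tendsto_one_div_sqrt_div_rpow ha₀ hlim_a
  have hf_asymp := tendsto_div_rpow_neg_of_tendsto_mul_rpow hlim_f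
  have hg_zero := hg.tendsto_nhdsGT_zero
  have hφ_zero := tendsto_nhdsGT_zero_of_continuousOn_Ici hφ_cont hφ0 hφ_pos
  obtain ⟨Lg, hLg, hg_asymp⟩ : ∃ L > 0, Tendsto (fun s => g s / s ^ (1 - μ)⁻¹) (𝓝[>] 0) (𝓝 L) :=
    ⟨_, by positivity, hg.tendsto_div_rpow hμ₁ ha₀ hlim_a⟩
  set α := (-γ + 1) * (1 - μ)⁻¹ with hα
  have hα_neg : α < 0 := mul_neg_of_neg_of_pos (by linarith) (by positivity)
  obtain ⟨A, hA, hG⟩ :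
      ∃ A > 0, Tendsto (fun x => (∫ ξ in Ioi (g x), f ξ) / x ^ α) (𝓝[>] 0) (𝓝 A) :=
    ⟨_, mul_pos (div_pos_of_neg_of_neg (by linarith) (by linarith)) (by positivity),
      (tendsto_integral_Ioi_div_rpow (by linarith) hf_int hf_asymp).comp_div_rpow
        hg_asymp hLg hg_zero⟩
  obtain ⟨Lφ, hLφ, hφ_asymp⟩ :
      ∃ L > 0, Tendsto (fun τ => φ τ / τ ^ (1 - α / 2)⁻¹) (𝓝[>] 0) (𝓝 L) :=
    ⟨_, Real.rpow_pos_of_pos (mul_pos (by linarith) (by positivity)) _,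
      tendsto_div_rpow_of_hasDerivAt_sqrt hα_neg hA hG hφ_zero
        (eventually_nhdsWithin_of_forall hφ')⟩
  have hw := hφ_asymp.mul_div_rpow (((hf_asymp.mul_div_rpow ha_asymp).comp_div_rpow
    hg_asymp hLg hg_zero).comp_div_rpow hφ_asymp hLφ hφ_zero)
  have hexp : (1 - α / 2)⁻¹ + (-γ + μ) * (1 - μ)⁻¹ * (1 - α / 2)⁻¹ =
      (2 - 2 * γ) / (1 + γ - 2 * μ) := by
    have : 1 + γ - 2 * μ ≠ 0 := by linarith
    rw [hα]
    field_simp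
    ring
  simp only [hexp, mul_one_div] at hw
  have hw_cont := hg.continuousOn_mul_comp_div_sqrt ha_reg.continuousOn ha_pos
    hf_reg.continuousOn hφ_cont hφ_pos
  refine ⟨_, by positivity, hw, ?_⟩
  rw [integrableOn_Ioo_zero_iff_of_tendsto_div_rpow one_pos hw_cont (by positivity) hw,
    lt_div_iff₀ (by linarith)]
  constructor <;> intro <;> linarith

/-- With `h(s) = f(g(s))/√(a(g(s)))`, the product `φ(τ)h(φ(τ))` behaves like
`τ^{(2−2γ)/(1+γ−2μ)}` as `τ → 0⁺`; consequently `∫₀¹ φ(ξ)h(φ(ξ)) dξ` is finite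
if and only if `γ < 3 − 2μ`. -/
theorem phi_h_integrability (a : ℝ → ℝ) (ha_pos : ∀ s > (0 : ℝ), 0 < a s)
    (ha_reg : ContDiffOn ℝ 1 a (Ioi 0)) (ha_bdd : ∃ c > (0 : ℝ), ∀ s > (0 : ℝ), c ≤ a s)
    (f : ℝ → ℝ) (hf_pos : ∀ s > (0 : ℝ), 0 < f s) (hf_reg : ContDiffOn ℝ 1 f (Ioi 0))
    (a₀ f₀ μ γ : ℝ) (ha₀ : 0 < a₀) (hf₀ : 0 < f₀) (hμ₀ : 0 ≤ μ) (hμ₁ : μ < 1) (hγ : 1 < γ)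
    (hlim_a : Tendsto (fun s : ℝ => a s * s ^ (2 * μ)) (𝓝[>] 0) (𝓝 a₀))
    (hlim_f : Tendsto (fun s : ℝ => f s * s ^ γ) (𝓝[>] 0) (𝓝 f₀))
    (hf_int : ∀ M > (0 : ℝ), IntegrableOn f (Ioi M))
    (g : ℝ → ℝ) (hg : IsCauchyG a g)
    (ℓ : ℝ) (hℓ : 0 ≤ ℓ) (φ : ℝ → ℝ)
    (hφ_cont : ContinuousOn φ (Ici 0)) (hφ_reg : ContDiffOn ℝ 2 φ (Ioi 0))
    (hφ0 : φ 0 = 0) (hφ_pos : ∀ s > (0 : ℝ), 0 < φ s)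
    (hφ' : ∀ s > (0 : ℝ),
      HasDerivAt φ (Real.sqrt (ℓ ^ 2 + 2 * ∫ ξ in Ioi (g (φ s)), f ξ)) s) :
    ∃ C > (0 : ℝ),
      Tendsto (fun τ : ℝ =>
          (φ τ * (f (g (φ τ)) / Real.sqrt (a (g (φ τ))))) / τ ^ ((2 - 2 * γ) / (1 + γ - 2 * μ)))
        (𝓝[>] 0) (𝓝 C) ∧
      (IntegrableOn (fun ξ => φ ξ * (f (g (φ ξ)) / Real.sqrt (a (g (φ ξ))))) (Ioo 0 1) ↔
        γ < 3 - 2 * μ) :=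
  phi_h_integrability_general a ha_pos ha_reg f hf_reg a₀ f₀ μ γ ha₀ hf₀ hμ₁ hγ hlim_a hlim_f hf_int
    g hg ℓ φ hφ_cont hφ0 hφ_pos hφ'
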